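/- arXiv:1611.04942 — 6 statements merged into one kernel-verified Lean document; each statement's English description precedes it below -/
import Mathlib

section
/- Let N > 0, φ₁, φ₂ ∈ (0,1), and k₁, k₂ > 0 be real numbers with k₁·φ₁ > 1. Let f_x, f̂_x, f_xy, f̂_xy be real numbers satisfying: f̂_xy − N/k₂ ≤ f_xy, f_x ≤ f̂_x, and f_x > (φ₁ − 1/k₁)·N (the bound holding for every reported primary-frequent candidate). If f_xy ≤ (φ₂ − (k₂·φ₂ + k₁)/(k₂·(k₁·φ₁ − 1)))·f_x, then f̂_xy ≤ φ₂·(f̂_x − N/k₁). (This is the second half of Theorem 2: no tuple whose primary item is a reported primary-frequent candidate and whose exact frequency is at most (φ₂ − (k₂φ₂ + k₁)/(k₂(k₁φ₁ − 1)))·f_x is reported as a correlated heavy hitter candidate.) -/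
/-!
Since `f̂_xy ≤ f_xy + N/k₂`, it suffices that `N/k₂ + φ₂ N/k₁` is absorbed by the margin
`(k₂φ₂ + k₁)/(k₂(k₁φ₁ - 1)) · f_x` in the hypothesis on `f_xy`, and then to replace `f_x` by the
larger `f̂_x`. The margin is exactly `N/k₂ + φ₂ N/k₁` at the candidate bound
`f_x = (φ₁ - 1/k₁) N = (k₁φ₁ - 1) N / k₁`, and it grows with `f_x`.
-/

lemma correlated_margin_at_candidate_bound {N φ₁ φ₂ k₁ k₂ : ℝ}
    (hk₁ : k₁ ≠ 0) (hk₂ : k₂ ≠ 0) (hk₁φ₁ : k₁ * φ₁ - 1 ≠ 0) :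
    (k₂ * φ₂ + k₁) / (k₂ * (k₁ * φ₁ - 1)) * ((φ₁ - 1 / k₁) * N) = N / k₂ + φ₂ * (N / k₁) := by
  field_simp
  ring

lemma correlated_margin_ge {N φ₁ φ₂ k₁ k₂ fx : ℝ}
    (hφ₂ : 0 ≤ φ₂) (hk₁ : 0 < k₁) (hk₂ : 0 < k₂) (hk₁φ₁ : 1 < k₁ * φ₁)
    (hcand : (φ₁ - 1 / k₁) * N ≤ fx) :
    N / k₂ + φ₂ * (N / k₁) ≤ (k₂ * φ₂ + k₁) / (k₂ * (k₁ * φ₁ - 1)) * fx := by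
  have hc : 0 < k₁ * φ₁ - 1 := sub_pos.mpr hk₁φ₁
  rw [← correlated_margin_at_candidate_bound hk₁.ne' hk₂.ne' hc.ne']
  gcongr

theorem cs_correlated_no_bad_false_positives_general
    (N φ₁ φ₂ k₁ k₂ fx fxhat fxy fxyhat : ℝ)
    (hφ₂ : 0 < φ₂)
    (hk₁ : 0 < k₁) (hk₂ : 0 < k₂) (hk₁φ₁ : k₁ * φ₁ > 1)
    (herr : fxyhat - N / k₂ ≤ fxy)
    (hover : fx ≤ fxhat)
    (hcand : fx > (φ₁ - 1 / k₁) * N)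
    (hfreq : fxy ≤ (φ₂ - (k₂ * φ₂ + k₁) / (k₂ * (k₁ * φ₁ - 1))) * fx) :
    fxyhat ≤ φ₂ * (fxhat - N / k₁) := by
  have hmargin := correlated_margin_ge hφ₂.le hk₁ hk₂ hk₁φ₁ hcand.le
  have hφ₂fx : φ₂ * fx ≤ φ₂ * fxhat := mul_le_mul_of_nonneg_left hover hφ₂.le
  calc fxyhat ≤ fxy + N / k₂ := by linarith
    _ ≤ φ₂ * fx - (k₂ * φ₂ + k₁) / (k₂ * (k₁ * φ₁ - 1)) * fx + N / k₂ := by linarith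
    _ ≤ φ₂ * fx - φ₂ * (N / k₁) := by linarith
    _ ≤ φ₂ * (fxhat - N / k₁) := by linarith

theorem cs_correlated_no_bad_false_positives
    (N φ₁ φ₂ k₁ k₂ fx fxhat fxy fxyhat : ℝ)
    (hN : 0 < N) (hφ₁ : 0 < φ₁) (hφ₁' : φ₁ < 1)
    (hφ₂ : 0 < φ₂) (hφ₂' : φ₂ < 1)
    (hk₁ : 0 < k₁) (hk₂ : 0 < k₂) (hk₁φ₁ : k₁ * φ₁ > 1)
    (herr : fxyhat - N / k₂ ≤ fxy)
    (hover : fx ≤ fxhat)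
    (hcand : fx > (φ₁ - 1 / k₁) * N)
    (hfreq : fxy ≤ (φ₂ - (k₂ * φ₂ + k₁) / (k₂ * (k₁ * φ₁ - 1))) * fx) :
    fxyhat ≤ φ₂ * (fxhat - N / k₁) :=
  cs_correlated_no_bad_false_positives_general N φ₁ φ₂ k₁ k₂ fx fxhat fxy fxyhat hφ₂ hk₁ hk₂ hk₁φ₁
    herr hover hcand hfreq
end

section
/- Let N > 0, φ₁, φ₂ ∈ (0,1), and k₁, k₂ > 0 be real numbers with k₁·φ₁ > 1. Let f_x, f̂_x, f_xy, f̂_xy be real numbers satisfying f̂_xy − N/k₂ ≤ f_xy, f_x ≤ f̂_x, and f_x > (φ₁ − 1/k₁)·N. If f̂_xy > φ₂·(f̂_x − N/k₁) (the tuple is reported as a correlated heavy hitter candidate), then f_xy > (φ₂ − (k₂·φ₂ + k₁)/(k₂·(k₁·φ₁ − 1)))·f_x. (This is the consequence of Theorem 2 stated at the end of its proof: every reported correlated heavy hitter candidate has exact tuple frequency strictly greater than (φ₂ − (k₂φ₂ + k₁)/(k₂(k₁φ₁ − 1)))·f_x.) -/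
theorem cs_correlated_candidate_lower_bound
    (N φ₁ φ₂ k₁ k₂ fx fxhat fxy fxyhat : ℝ)
    (hN : 0 < N) (hφ₁ : 0 < φ₁) (hφ₁' : φ₁ < 1)
    (hφ₂ : 0 < φ₂) (hφ₂' : φ₂ < 1)
    (hk₁ : 0 < k₁) (hk₂ : 0 < k₂) (hk₁φ₁ : k₁ * φ₁ > 1)
    (herr : fxyhat - N / k₂ ≤ fxy)
    (hover : fx ≤ fxhat)
    (hcand : fx > (φ₁ - 1 / k₁) * N)
    (hreport : fxyhat > φ₂ * (fxhat - N / k₁)) :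
    fxy > (φ₂ - (k₂ * φ₂ + k₁) / (k₂ * (k₁ * φ₁ - 1))) * fx := by
  have hD : 0 < k₂ * (k₁ * φ₁ - 1) := by nlinarith
  have h1 : fxy > φ₂ * (fx - N / k₁) - N / k₂ := by
    nlinarith [mul_le_mul_of_nonneg_left hover hφ₂.le]
  have hC : (k₂ * φ₂ + k₁) / (k₂ * (k₁ * φ₁ - 1)) * fx > φ₂ * (N / k₁) + N / k₂ := by
    rw [div_mul_eq_mul_div, gt_iff_lt, lt_div_iff₀ hD]
    have h2 : fx * k₁ > (k₁ * φ₁ - 1) * N := by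
      have := mul_lt_mul_of_pos_right hcand hk₁
      field_simp at this ⊢
      nlinarith
    have hk0 : (0:ℝ) < k₁ * k₂ := by positivity
    rw [show φ₂ * (N / k₁) + N / k₂ = (φ₂ * N * k₂ + N * k₁) / (k₁ * k₂) by
      field_simp, div_mul_eq_mul_div, div_lt_iff₀ hk0]
    nlinarith [mul_lt_mul_of_pos_left h2 (show (0:ℝ) < k₂ * φ₂ + k₁ by positivity)]
  linarith [h1, hC]
end

section
/- Let φ₁, φ₂, ε₂ be real numbers with 0 < φ₁ < 1, 0 < ε₂ < φ₂ < 1, and let k₁ > (ε₂ + φ₂)/(ε₂·φ₁). Then k₁/(ε₂·k₁·φ₁ − ε₂ − φ₂) > 1/(φ₁·φ₂). (This is the claim that constraint C3 — requiring k₂ ≥ 1/(φ₁φ₂) tuple counters so that all of the at most 1/(φ₁φ₂) correlated heavy hitters can be tracked — is subsumed by constraint C4, which requires k₂ ≥ k₁/(ε₂k₁φ₁ − ε₂ − φ₂).) -/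
theorem cs_constraint_C3_subsumed_by_C4
    (φ₁ φ₂ ε₂ k₁ : ℝ)
    (hφ₁ : 0 < φ₁) (hφ₁' : φ₁ < 1)
    (hε₂ : 0 < ε₂) (hε₂φ₂ : ε₂ < φ₂) (hφ₂' : φ₂ < 1)
    (hk₁ : k₁ > (ε₂ + φ₂) / (ε₂ * φ₁)) :
    k₁ / (ε₂ * k₁ * φ₁ - ε₂ - φ₂) > 1 / (φ₁ * φ₂) := by
  have hεφ : 0 < ε₂ * φ₁ := by positivity
  have hk : ε₂ + φ₂ < k₁ * (ε₂ * φ₁) := (div_lt_iff₀ hεφ).mp hk₁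
  have hD : 0 < ε₂ * k₁ * φ₁ - ε₂ - φ₂ := by nlinarith
  have hφ₂pos : 0 < φ₂ := hε₂.trans hε₂φ₂
  have hk₁pos : 0 < k₁ := by nlinarith
  rw [gt_iff_lt, div_lt_div_iff₀ (by positivity) hD]
  nlinarith [mul_pos hk₁pos hφ₁]
end

section
/- Let φ₁, φ₂, ε₁, ε₂ be real numbers with 0 < φ₁ < 1, 0 < ε₁ < φ₁, and 0 < ε₂ < φ₂ < 1, and set β = 1/(ε₂·φ₁) and γ = (ε₂ + φ₂)/(ε₂·φ₁). Assume 1/ε₁ > γ + √(β·γ), and set k₁ = 1/ε₁ and k₂ = β·k₁/(k₁ − γ). Then k₁ + k₂ < 1/ε₁ + 1/(ε₁·√(ε₂ + φ₂)). (This is the space bound of CSSCHH in the case 1/ε₁ > γ + √(βγ), establishing the space complexity O(1/(ε₁·√ε₂)).) -/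
/-!
With `s = √(ε₂ + φ₂)` one has `√(βγ) = β s`, so the hypothesis says `k₁ - γ > β s`.
Hence `k₂ = β k₁ / (k₁ - γ) < β k₁ / (β s) = k₁ / s = 1 / (ε₁ s)`.
-/

theorem Real.sqrt_one_div_mul_div {p : ℝ} (hp : 0 ≤ p) (t : ℝ) :
    √(1 / p * (t / p)) = 1 / p * √t := by
  rw [show 1 / p * (t / p) = t / (p * p) by ring, Real.sqrt_div' t (mul_self_nonneg p),
    Real.sqrt_mul_self hp]
  ring

theorem mul_div_sub_lt_div_of_mul_lt_sub {β k g s : ℝ} (hβ : 0 < β) (hk : 0 < k) (hs : 0 < s)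
    (hgap : β * s < k - g) : β * k / (k - g) < k / s :=
  calc β * k / (k - g) < β * k / (β * s) :=
        div_lt_div_of_pos_left (mul_pos hβ hk) (mul_pos hβ hs) hgap
    _ = k / s := mul_div_mul_left k s hβ.ne'

theorem cs_space_bound_case2_general
    (φ₁ φ₂ ε₁ ε₂ : ℝ)
    (hφ₁ : 0 < φ₁)
    (hε₁ : 0 < ε₁)
    (hε₂ : 0 < ε₂) (hε₂φ₂ : ε₂ < φ₂) :
    let β := 1 / (ε₂ * φ₁)
    let γ := (ε₂ + φ₂) / (ε₂ * φ₁)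
    1 / ε₁ > γ + Real.sqrt (β * γ) →
    (let k₁ := 1 / ε₁
     let k₂ := β * k₁ / (k₁ - γ)
     k₁ + k₂ < 1 / ε₁ + 1 / (ε₁ * Real.sqrt (ε₂ + φ₂))) := by
  intro β γ h k₁ k₂
  have hp : 0 < ε₂ * φ₁ := mul_pos hε₂ hφ₁
  have hs : 0 < √(ε₂ + φ₂) := Real.sqrt_pos.2 (by linarith)
  have hgap : β * √(ε₂ + φ₂) < k₁ - γ := by
    have hβγ : √(β * γ) = β * √(ε₂ + φ₂) := Real.sqrt_one_div_mul_div hp.le _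
    linarith
  have hk₂ : k₂ < k₁ / √(ε₂ + φ₂) :=
    mul_div_sub_lt_div_of_mul_lt_sub (one_div_pos.2 hp) (one_div_pos.2 hε₁) hs hgap
  calc k₁ + k₂ < k₁ + k₁ / √(ε₂ + φ₂) := by linarith
    _ = 1 / ε₁ + 1 / (ε₁ * √(ε₂ + φ₂)) := by rw [div_div]

theorem cs_space_bound_case2
    (φ₁ φ₂ ε₁ ε₂ : ℝ)
    (hφ₁ : 0 < φ₁) (hφ₁' : φ₁ < 1)
    (hε₁ : 0 < ε₁) (hε₁φ₁ : ε₁ < φ₁)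
    (hε₂ : 0 < ε₂) (hε₂φ₂ : ε₂ < φ₂) (hφ₂' : φ₂ < 1) :
    let β := 1 / (ε₂ * φ₁)
    let γ := (ε₂ + φ₂) / (ε₂ * φ₁)
    1 / ε₁ > γ + Real.sqrt (β * γ) →
    (let k₁ := 1 / ε₁
     let k₂ := β * k₁ / (k₁ - γ)
     k₁ + k₂ < 1 / ε₁ + 1 / (ε₁ * Real.sqrt (ε₂ + φ₂))) :=
  cs_space_bound_case2_general φ₁ φ₂ ε₁ ε₂ hφ₁ hε₁ hε₂ hε₂φ₂
end

section
/- Let φ₁, φ₂, ε₁, ε₂ be real numbers with 0 < φ₁ < 1, 0 < ε₁ < φ₁, and 0 < ε₂ < φ₂ < 1, and set β = 1/(ε₂·φ₁), γ = (ε₂ + φ₂)/(ε₂·φ₁), k₁ = max{1/ε₁, γ + √(β·γ)} and k₂ = β·k₁/(k₁ − γ). Then: (i) k₁ > γ (so k₂ is well defined and positive); (ii) k₁·φ₁ > 1; (iii) 1/k₁ ≤ ε₁; and (iv) (k₂·φ₂ + k₁)/(k₂·(k₁·φ₁ − 1)) ≤ ε₂. (This verifies that the counter counts chosen by the CSSCHH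 initialization procedure satisfy all the constraints C1–C4 required to solve the Approximate Correlated Heavy Hitters problem within the error bounds ε₁ and ε₂.) -/
/-!
The choice `k₂ = β k₁ / (k₁ - γ)` is exactly the solution of `k₂ φ₂ + k₁ = ε₂ k₂ (k₁ φ₁ - 1)`
in `k₂`, so constraint (iv) holds with equality for every `k₁ > γ`; the square-root term only
makes `k₁ > γ` strict. Since `γ φ₁ = 1 + φ₂ / ε₂ > 1`, `k₁ > γ` also gives `k₁ φ₁ > 1`, and
`k₁ ≥ 1 / ε₁` gives `1 / k₁ ≤ ε₁`.
-/

lemma one_lt_add_div_mul_mul {ε φ₁ φ₂ : ℝ} (hε : 0 < ε) (hφ₁ : 0 < φ₁) (hφ₂ : 0 < φ₂) :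
    1 < (ε + φ₂) / (ε * φ₁) * φ₁ := by
  rw [div_mul_eq_mul_div, lt_div_iff₀ (mul_pos hε hφ₁)]
  nlinarith

lemma add_mul_eq_mul_mul_sub_one {ε φ₁ φ₂ k₁ k₂ : ℝ} (hε : ε ≠ 0) (hφ₁ : φ₁ ≠ 0)
    (hk₂ : k₂ * (k₁ - (ε + φ₂) / (ε * φ₁)) = 1 / (ε * φ₁) * k₁) :
    k₂ * φ₂ + k₁ = ε * (k₂ * (k₁ * φ₁ - 1)) := by
  linear_combination (norm := (field_simp; ring)) (-(ε * φ₁)) * hk₂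

theorem cs_init_satisfies_constraints_general
    (φ₁ φ₂ ε₁ ε₂ : ℝ)
    (hφ₁ : 0 < φ₁)
    (hε₁ : 0 < ε₁)
    (hε₂ : 0 < ε₂) (hε₂φ₂ : ε₂ < φ₂) :
    let β := 1 / (ε₂ * φ₁)
    let γ := (ε₂ + φ₂) / (ε₂ * φ₁)
    let k₁ := max (1 / ε₁) (γ + Real.sqrt (β * γ))
    let k₂ := β * k₁ / (k₁ - γ)
    k₁ > γ ∧ k₁ * φ₁ > 1 ∧ 1 / k₁ ≤ ε₁ ∧
      (k₂ * φ₂ + k₁) / (k₂ * (k₁ * φ₁ - 1)) ≤ ε₂ := by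
  intro β γ k₁ k₂
  have hφ₂ : 0 < φ₂ := hε₂.trans hε₂φ₂
  have hγ : 0 < γ := by positivity
  have hk₁γ : γ < k₁ :=
    (lt_add_of_pos_right γ (by positivity : 0 < Real.sqrt (β * γ))).trans_le (le_max_right _ _)
  have hk₁ : 0 < k₁ := hγ.trans hk₁γ
  have hk₁φ₁ : 1 < k₁ * φ₁ :=
    (one_lt_add_div_mul_mul hε₂ hφ₁ hφ₂).trans (mul_lt_mul_of_pos_right hk₁γ hφ₁)
  have hk₂ : 0 < k₂ := by positivity
  refine ⟨hk₁γ, hk₁φ₁, (one_div_le hk₁ hε₁).mpr (le_max_left _ _), le_of_eq ?_⟩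
  exact div_eq_of_eq_mul (mul_pos hk₂ (sub_pos.mpr hk₁φ₁)).ne'
    (add_mul_eq_mul_mul_sub_one hε₂.ne' hφ₁.ne' (div_mul_cancel₀ _ (sub_pos.mpr hk₁γ).ne'))

theorem cs_init_satisfies_constraints
    (φ₁ φ₂ ε₁ ε₂ : ℝ)
    (hφ₁ : 0 < φ₁) (hφ₁' : φ₁ < 1)
    (hε₁ : 0 < ε₁) (hε₁φ₁ : ε₁ < φ₁)
    (hε₂ : 0 < ε₂) (hε₂φ₂ : ε₂ < φ₂) (hφ₂' : φ₂ < 1) :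
    let β := 1 / (ε₂ * φ₁)
    let γ := (ε₂ + φ₂) / (ε₂ * φ₁)
    let k₁ := max (1 / ε₁) (γ + Real.sqrt (β * γ))
    let k₂ := β * k₁ / (k₁ - γ)
    k₁ > γ ∧ k₁ * φ₁ > 1 ∧ 1 / k₁ ≤ ε₁ ∧
      (k₂ * φ₂ + k₁) / (k₂ * (k₁ * φ₁ - 1)) ≤ ε₂ :=
  cs_init_satisfies_constraints_general φ₁ φ₂ ε₁ ε₂ hφ₁ hε₁ hε₂ hε₂φ₂
end

section
/- Let N > 0, and let φ₁, φ₂, ε₁, ε₂ be real numbers with 0 < φ₁ < 1, 0 < ε₁ < φ₁, 0 < ε₂ < φ₂ < 1. Set β = 1/(ε₂·φ₁), γ = (ε₂ + φ₂)/(ε₂·φ₁), k₁ = max{1/ε₁, γ + √(β·γ)}, k₂ = β·k₁/(k₁ − γ). Let f_x, f̂_x, f_xy, f̂_xy be real numbers with f_x ≤ f̂_x ≤ f_x + N/k₁ and f_xy ≤ f̂_xy ≤ f_xy + N/k₂ (the Space Saving guarantees for the two summaries). If f̂_x > φ₁·N and f̂_xy > φ₂·(f̂_x − N/k₁) (the tuple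 (x,y) is reported by CSSCHH as a correlated heavy hitter candidate), then f_x > (φ₁ − ε₁)·N and f_xy > (φ₂ − ε₂)·f_x. (This is the overall correctness of CSSCHH for the Approximate Correlated Heavy Hitters problem: with the counter counts chosen at initialization, no reported primary candidate violates the ε₁ tolerance and no reported correlated candidate violates the ε₂ tolerance.) -/
/-! Let `e₁ = N / k₁` and `e₂ = N / k₂` be the additive errors of the two summaries. The bound
`k₁ ≥ 1 / ε₁` gives `e₁ ≤ ε₁ N`, which settles the primary items. The choice of `k₂` is exactly what
makes `e₂ = ε₂ φ₁ N - (ε₂ + φ₂) e₁`; with this error budget the reporting threshold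
`φ₂ (f̂_x - e₁)` loses at most `ε₂ (φ₁ N - e₁) < ε₂ f_x` against `φ₂ f_x`. For correctness, the term
`√(β γ)` in `k₁` matters only because it keeps `k₁ > γ`, so that `k₂` is positive. -/

lemma div_le_mul_of_one_div_le {N ε k : ℝ} (hN : 0 ≤ N) (hε : 0 < ε) (hk : 1 / ε ≤ k) :
    N / k ≤ ε * N := by
  calc N / k ≤ N / (1 / ε) := div_le_div_of_nonneg_left hN (one_div_pos.2 hε) hk
    _ = ε * N := by rw [div_div_eq_mul_div, div_one, mul_comm]

lemma div_one_div_mul_div_sub_div {N c a k : ℝ} (hc : c ≠ 0) (hk : k ≠ 0) (hka : k ≠ a / c) :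
    N / (1 / c * k / (k - a / c)) = c * N - a * (N / k) := by
  have : k - a / c ≠ 0 := sub_ne_zero.2 hka
  field_simp

lemma correlated_lower_bound {fx fxhat fxy fxyhat N φ₁ φ₂ ε₂ e₁ e₂ : ℝ}
    (hε₂ : 0 ≤ ε₂) (hφ₂ : 0 ≤ φ₂) (he₂ : e₂ ≤ ε₂ * φ₁ * N - (ε₂ + φ₂) * e₁)
    (hx_lo : fx ≤ fxhat) (hx_hi : fxhat ≤ fx + e₁) (hxy_hi : fxyhat ≤ fxy + e₂)
    (hx_rep : φ₁ * N < fxhat) (hxy_rep : φ₂ * (fxhat - e₁) < fxyhat) :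
    (φ₂ - ε₂) * fx < fxy := by
  have hφ₂fx : φ₂ * fx ≤ φ₂ * fxhat := mul_le_mul_of_nonneg_left hx_lo hφ₂
  have hε₂fx : ε₂ * (φ₁ * N - e₁) ≤ ε₂ * fx := mul_le_mul_of_nonneg_left (by linarith) hε₂
  linarith

theorem cs_overall_correctness_general
    (N φ₁ φ₂ ε₁ ε₂ : ℝ)
    (hN : 0 < N)
    (hφ₁ : 0 < φ₁)
    (hε₁ : 0 < ε₁)
    (hε₂ : 0 < ε₂) (hε₂φ₂ : ε₂ < φ₂) :
    let β := 1 / (ε₂ * φ₁)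
    let γ := (ε₂ + φ₂) / (ε₂ * φ₁)
    let k₁ := max (1 / ε₁) (γ + Real.sqrt (β * γ))
    let k₂ := β * k₁ / (k₁ - γ)
    ∀ fx fxhat fxy fxyhat : ℝ,
      fx ≤ fxhat → fxhat ≤ fx + N / k₁ →
      fxy ≤ fxyhat → fxyhat ≤ fxy + N / k₂ →
      fxhat > φ₁ * N → fxyhat > φ₂ * (fxhat - N / k₁) →
      fx > (φ₁ - ε₁) * N ∧ fxy > (φ₂ - ε₂) * fx := by
  intro β γ k₁ k₂ fx fxhat fxy fxyhat hx_lo hx_hi _ hxy_hi hx_rep hxy_rep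
  have hφ₂ : 0 < φ₂ := hε₂.trans hε₂φ₂
  have hγ : 0 < γ := div_pos (by linarith) (mul_pos hε₂ hφ₁)
  have hγk₁ : γ < k₁ :=
    (lt_add_of_pos_right γ (Real.sqrt_pos.2 (by positivity))).trans_le (le_max_right _ _)
  have he₁ : N / k₁ ≤ ε₁ * N := div_le_mul_of_one_div_le hN.le hε₁ (le_max_left _ _)
  have he₂ : N / k₂ = ε₂ * φ₁ * N - (ε₂ + φ₂) * (N / k₁) :=
    div_one_div_mul_div_sub_div (by positivity) (hγ.trans hγk₁).ne' hγk₁.ne'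
  exact ⟨by linarith,
    correlated_lower_bound hε₂.le hφ₂.le he₂.le hx_lo hx_hi hxy_hi hx_rep hxy_rep⟩

theorem cs_overall_correctness
    (N φ₁ φ₂ ε₁ ε₂ : ℝ)
    (hN : 0 < N)
    (hφ₁ : 0 < φ₁) (hφ₁' : φ₁ < 1)
    (hε₁ : 0 < ε₁) (hε₁φ₁ : ε₁ < φ₁)
    (hε₂ : 0 < ε₂) (hε₂φ₂ : ε₂ < φ₂) (hφ₂' : φ₂ < 1) :
    let β := 1 / (ε₂ * φ₁)
    let γ := (ε₂ + φ₂) / (ε₂ * φ₁)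
    let k₁ := max (1 / ε₁) (γ + Real.sqrt (β * γ))
    let k₂ := β * k₁ / (k₁ - γ)
    ∀ fx fxhat fxy fxyhat : ℝ,
      fx ≤ fxhat → fxhat ≤ fx + N / k₁ →
      fxy ≤ fxyhat → fxyhat ≤ fxy + N / k₂ →
      fxhat > φ₁ * N → fxyhat > φ₂ * (fxhat - N / k₁) →
      fx > (φ₁ - ε₁) * N ∧ fxy > (φ₂ - ε₂) * fx :=
  cs_overall_correctness_general N φ₁ φ₂ ε₁ ε₂ hN hφ₁ hε₁ hε₂ hε₂φ₂
end
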